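/- arXiv:2007.00307 — 4 statements merged into one kernel-verified Lean document; each statement's English description precedes it below -/
import Mathlib

section
/- Let n ≥ 2 be an integer and let q be a real number with 0 ≤ q ≤ 2^{-n}. Let Q be the probability distribution on (ZMod 2)^n with Q(f) = q for every nonzero f (and hence Q(0) = 1 − (2^n − 1)q). Define the inclusive model P by P(f) = 1/2 − (1/2)(1 − 2^n q)^{2^{1−n}} for every nonzero f (the same conclusion holds with the + sign). Then P induces Q, i.e., for every f ∈ (ZMod 2)^n, Q(f) = Σ over subsets S of the nonzero elements of (ZMod 2)^n with Σ_{s∈S} s = f of ∏_{s∈S} P(s) · ∏_{s∉S, s≠0} (1 − P(s)). -/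
open Finset

/-!
Under the Walsh–Hadamard transform `F ↦ (t ↦ ∑ f, F f (-1)^(t ⬝ᵥ f))` the distribution induced by
independent errors becomes a product: at `t ≠ 0` it is `∏_{s ≠ 0} (1 - 2 P s [t ⬝ᵥ s = 1])`,
and for constant `P = p` this is `(1 - 2p)^(2^(n-1))`, because exactly half of all `s` satisfy
`t ⬝ᵥ s = 1`. The uniform exclusive model transforms to `1 - 2^n q` at every `t ≠ 0`, and `p` is
chosen so that `(1 - 2p)^(2^(n-1)) = 1 - 2^n q`. Both transforms are `1` at `t = 0`, and the
transform is injective.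
-/

theorem AddChar.map_sum_eq_prod {ι A M : Type*} [AddCommMonoid A] [CommMonoid M]
    (ψ : AddChar A M) (s : Finset ι) (f : ι → A) : ψ (∑ i ∈ s, f i) = ∏ i ∈ s, ψ (f i) := by
  classical
  induction s using Finset.induction_on with
  | empty => simp
  | insert a s ha ih => rw [sum_insert ha, prod_insert ha, AddChar.map_add_eq_mul, ih]

section InclusiveModel

variable {G R : Type*} [AddCommMonoid G] [DecidableEq G] [CommRing R]

def inclusiveDist (E : Finset G) (P : G → R) (f : G) : R :=
  ∑ S ∈ E.powerset.filter (fun S => ∑ s ∈ S, s = f), (∏ s ∈ S, P s) * ∏ s ∈ E \ S, (1 - P s)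

theorem sum_inclusiveDist_mul_addChar [Fintype G] (E : Finset G) (P : G → R)
    (ψ : AddChar G R) :
    ∑ f, inclusiveDist E P f * ψ f = ∏ s ∈ E, (P s * ψ s + (1 - P s)) :=
  calc ∑ f, inclusiveDist E P f * ψ f
      = ∑ f, ∑ S ∈ E.powerset.filter (fun S => ∑ s ∈ S, s = f),
          (∏ s ∈ S, P s) * (∏ s ∈ E \ S, (1 - P s)) * ψ (∑ s ∈ S, s) := by
        refine sum_congr rfl fun f _ => ?_
        rw [inclusiveDist, sum_mul]
        exact sum_congr rfl fun S hS => by rw [(mem_filter.mp hS).2]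
    _ = ∑ S ∈ E.powerset, (∏ s ∈ S, P s) * (∏ s ∈ E \ S, (1 - P s)) * ψ (∑ s ∈ S, s) :=
        sum_fiberwise_of_maps_to (fun S _ => mem_univ _) _
    _ = ∑ S ∈ E.powerset, (∏ s ∈ S, P s * ψ s) * ∏ s ∈ E \ S, (1 - P s) := by
        refine sum_congr rfl fun S _ => ?_
        rw [AddChar.map_sum_eq_prod, prod_mul_distrib]
        ring
    _ = ∏ s ∈ E, (P s * ψ s + (1 - P s)) := (prod_add _ _ _).symm

end InclusiveModel

section Walsh

variable {ι : Type*} [Fintype ι]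

noncomputable def walshChar (t : ι → ZMod 2) : AddChar (ι → ZMod 2) ℝ where
  toFun f := (-1) ^ (t ⬝ᵥ f).val
  map_zero_eq_one' := by simp
  map_add_eq_mul' f g := by
    rw [dotProduct_add]
    exact AddChar.map_add_eq_mul (AddChar.zmodChar 2 (ζ := (-1 : ℝ)) (by norm_num)) _ _

theorem walshChar_apply (t f : ι → ZMod 2) : walshChar t f = (-1) ^ (t ⬝ᵥ f).val := rfl

theorem walshChar_comm (t f : ι → ZMod 2) : walshChar t f = walshChar f t := by
  rw [walshChar_apply, walshChar_apply, dotProduct_comm]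

theorem walshChar_eq_one_or_eq_neg_one (t f : ι → ZMod 2) :
    walshChar t f = 1 ∨ walshChar t f = -1 :=
  neg_one_pow_eq_or ℝ _

variable [DecidableEq ι]

theorem walshChar_ne_zero {t : ι → ZMod 2} (ht : t ≠ 0) : walshChar t ≠ 0 := by
  obtain ⟨i, hi⟩ := Function.ne_iff.mp ht
  have hti : t i = 1 := (by decide : ∀ x : ZMod 2, x ≠ 0 → x = 1) _ hi
  refine AddChar.ne_zero_iff.mpr ⟨Pi.single i 1, ?_⟩
  rw [walshChar_apply, dotProduct_single, hti, mul_one, ZMod.val_one]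
  norm_num

theorem sum_walshChar (t : ι → ZMod 2) :
    ∑ f, walshChar t f = if t = 0 then 2 ^ Fintype.card ι else 0 := by
  split_ifs with ht
  · simp [ht, walshChar_apply]
  · exact AddChar.sum_eq_zero_iff_ne_zero.mpr (walshChar_ne_zero ht)

theorem sum_walshChar_mul_walshChar (f u : ι → ZMod 2) :
    ∑ t, walshChar t f * walshChar t u = if f = u then 2 ^ Fintype.card ι else 0 := by
  have hneg : -u = u := funext fun i => ZMod.neg_eq_self_mod_two (u i)
  simp_rw [← AddChar.map_add_eq_mul, walshChar_comm _ (f + u), sum_walshChar,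
    add_eq_zero_iff_eq_neg, hneg]

noncomputable def walshTransform (F : (ι → ZMod 2) → ℝ) (t : ι → ZMod 2) : ℝ :=
  ∑ f, F f * walshChar t f

theorem sum_walshTransform_mul_walshChar (F : (ι → ZMod 2) → ℝ) (u : ι → ZMod 2) :
    ∑ t, walshTransform F t * walshChar t u = 2 ^ Fintype.card ι * F u := by
  simp_rw [walshTransform, sum_mul, mul_assoc]
  rw [sum_comm]
  simp_rw [← mul_sum, sum_walshChar_mul_walshChar]
  simp [mul_comm]

theorem walshTransform_injective : Function.Injective (walshTransform (ι := ι)) := by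
  intro F H h
  funext u
  have hFH := sum_walshTransform_mul_walshChar F u
  rw [h, sum_walshTransform_mul_walshChar] at hFH
  exact (mul_left_cancel₀ (by positivity) hFH).symm

theorem walshTransform_of_forall_ne_zero_eq {Q : (ι → ZMod 2) → ℝ} {q : ℝ}
    (hQ : ∀ f, f ≠ 0 → Q f = q) (t : ι → ZMod 2) :
    walshTransform Q t = Q 0 - q + if t = 0 then 2 ^ Fintype.card ι * q else 0 := by
  calc walshTransform Q t = ∑ f, (Q f - q) * walshChar t f + q * ∑ f, walshChar t f := by
        rw [walshTransform, mul_sum, ← sum_add_distrib]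
        exact sum_congr rfl fun _ _ => by ring
    _ = _ := by
        rw [sum_eq_single 0 (fun f _ hf => by rw [hQ f hf, sub_self, zero_mul]) (by simp),
          sum_walshChar, AddChar.map_zero_eq_one, mul_one, mul_ite, mul_zero, mul_comm q]

theorem card_walshChar_eq_neg_one {t : ι → ZMod 2} (ht : t ≠ 0) :
    #{f | walshChar t f = -1} = 2 ^ (Fintype.card ι - 1) := by
  have hι : Fintype.card ι ≠ 0 :=
    (Fintype.card_pos_iff.mpr ⟨(Function.ne_iff.mp ht).choose⟩).ne'
  have hcard : (#{f | walshChar t f = -1} : ℝ) * 2 = 2 ^ Fintype.card ι :=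
    calc (#{f | walshChar t f = -1} : ℝ) * 2 = ∑ f, (1 - walshChar t f) := by
          rw [natCast_card_filter, sum_mul]
          refine sum_congr rfl fun f _ => ?_
          rcases walshChar_eq_one_or_eq_neg_one t f with h | h <;> norm_num [h]
      _ = 2 ^ Fintype.card ι := by
          rw [sum_sub_distrib, sum_walshChar, if_neg ht]
          simp
  rw [← pow_sub_one_mul hι] at hcard
  exact_mod_cast mul_right_cancel₀ two_ne_zero hcard

theorem prod_ne_zero_mul_walshChar_add_one_sub (p : ℝ) (t : ι → ZMod 2) :
    ∏ s ∈ univ.filter (· ≠ 0), (p * walshChar t s + (1 - p)) =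
      if t = 0 then 1 else (1 - 2 * p) ^ 2 ^ (Fintype.card ι - 1) := by
  split_ifs with ht
  · exact prod_eq_one fun s _ => by simp [ht, walshChar_apply]
  · calc ∏ s ∈ univ.filter (· ≠ 0), (p * walshChar t s + (1 - p))
        = ∏ s, (p * walshChar t s + (1 - p)) :=
          prod_filter_of_ne fun s _ h hs => h (by simp [hs])
      _ = ∏ s, if walshChar t s = -1 then 1 - 2 * p else 1 :=
          prod_congr rfl fun s _ => by
            rcases walshChar_eq_one_or_eq_neg_one t s with h | h
            · norm_num [h]
            · norm_num [h]
              ring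
      _ = (1 - 2 * p) ^ 2 ^ (Fintype.card ι - 1) := by
          rw [← prod_filter, prod_const, card_walshChar_eq_neg_one ht]

end Walsh

theorem rpow_two_rpow_one_sub_pow_two_pow_sub_one {x : ℝ} (hx : 0 ≤ x) {n : ℕ} (hn : n ≠ 0) :
    (x ^ (2 : ℝ) ^ (1 - (n : ℝ))) ^ 2 ^ (n - 1) = x := by
  have hexp : (2 : ℝ) ^ (1 - (n : ℝ)) = ((2 ^ (n - 1) : ℕ) : ℝ)⁻¹ := by
    rw [show 1 - (n : ℝ) = -((n - 1 : ℕ) : ℝ) by push_cast [Nat.one_le_iff_ne_zero.mpr hn]; ring,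
      Real.rpow_neg zero_le_two, Real.rpow_natCast]
    push_cast
    rfl
  rw [hexp, Real.rpow_inv_natCast_pow hx (by positivity)]

theorem inclusive_induces_uniform_exclusive_general
    (n : ℕ) (q : ℝ) (hq1 : q ≤ ((2 : ℝ) ^ n)⁻¹)
    (Q P : (Fin n → ZMod 2) → ℝ)
    (hQne : ∀ f : Fin n → ZMod 2, f ≠ 0 → Q f = q)
    (hQ0 : Q 0 = 1 - ((2 : ℝ) ^ n - 1) * q)
    (hP : ∀ f : Fin n → ZMod 2, f ≠ 0 →
      P f = 1 / 2 - 1 / 2 * (1 - 2 ^ n * q) ^ ((2 : ℝ) ^ (1 - (n : ℝ)))) :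
    ∀ f : Fin n → ZMod 2,
      Q f = ∑ S ∈ (univ.filter fun g : Fin n → ZMod 2 => g ≠ 0).powerset.filter
              (fun S => ∑ s ∈ S, s = f),
            (∏ s ∈ S, P s) *
              ∏ s ∈ (univ.filter fun g : Fin n → ZMod 2 => g ≠ 0) \ S, (1 - P s) := by
  have hx : 0 ≤ 1 - 2 ^ n * q := by
    rwa [sub_nonneg, ← le_inv_mul_iff₀ (by positivity), mul_one]
  suffices Q = inclusiveDist (univ.filter (· ≠ 0)) P from fun f => congrFun this f
  refine walshTransform_injective (funext fun t => ?_)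
  rw [walshTransform_of_forall_ne_zero_eq hQne, walshTransform, sum_inclusiveDist_mul_addChar,
    prod_congr rfl fun s hs => by rw [hP s (mem_filter.mp hs).2],
    prod_ne_zero_mul_walshChar_add_one_sub, hQ0, Fintype.card_fin]
  rcases eq_or_ne t 0 with rfl | ht
  · rw [if_pos rfl, if_pos rfl]
    ring
  · have hn : n ≠ 0 := by
      rintro rfl
      exact ht (Subsingleton.elim _ _)
    rw [if_neg ht, if_neg ht, show ∀ c : ℝ, 1 - 2 * (1 / 2 - 1 / 2 * c) = c by intro; ring,
      rpow_two_rpow_one_sub_pow_two_pow_sub_one hx hn]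
    ring

/-- For `n ≥ 2` and `0 ≤ q ≤ 2^{-n}`, the uniform exclusive error model `Q`
(with `Q f = q` for all nonzero `f` and `Q 0 = 1 - (2^n - 1) q`) is induced by the constant
inclusive error model `P f = 1/2 - (1/2)(1 - 2^n q)^{2^{1-n}}`. -/
theorem inclusive_induces_uniform_exclusive
    (n : ℕ) (hn : 2 ≤ n) (q : ℝ) (hq0 : 0 ≤ q) (hq1 : q ≤ ((2 : ℝ) ^ n)⁻¹)
    (Q P : (Fin n → ZMod 2) → ℝ)
    (hQne : ∀ f : Fin n → ZMod 2, f ≠ 0 → Q f = q)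
    (hQ0 : Q 0 = 1 - ((2 : ℝ) ^ n - 1) * q)
    (hP : ∀ f : Fin n → ZMod 2, f ≠ 0 →
      P f = 1 / 2 - 1 / 2 * (1 - 2 ^ n * q) ^ ((2 : ℝ) ^ (1 - (n : ℝ)))) :
    ∀ f : Fin n → ZMod 2,
      Q f = ∑ S ∈ (univ.filter fun g : Fin n → ZMod 2 => g ≠ 0).powerset.filter
              (fun S => ∑ s ∈ S, s = f),
            (∏ s ∈ S, P s) *
              ∏ s ∈ (univ.filter fun g : Fin n → ZMod 2 => g ≠ 0) \ S, (1 - P s) :=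
  inclusive_induces_uniform_exclusive_general n q hq1 Q P hQne hQ0 hP
end

section
/- Let n ≥ 2 and let E be the set of nonzero elements of (ZMod 2)^n. For g ∈ (ZMod 2)^n and a natural number k, let A_g^k be the set of subsets S ⊆ E with |S| = k and Σ_{s∈S} s = g. Then for any two nonzero elements f, f' of (ZMod 2)^n and any k, the sets A_f^k and A_{f'}^k have the same cardinality. -/
/-!
The linear automorphisms of `(ZMod 2)^n` act transitively on its nonzero vectors, and an additive
automorphism `e` permutes the nonzero elements and carries a set with sum `f` to one with sum
`e f`; so `S ↦ e '' S` is a bijection `A_f^k ≃ A_{e f}^k`.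
-/

open Finset

theorem Module.exists_linearEquiv_apply_eq {K V : Type*} [DivisionRing K] [AddCommGroup V]
    [Module K V] {x y : V} (hx : x ≠ 0) (hy : y ≠ 0) : ∃ e : V ≃ₗ[K] V, e x = y := by
  obtain ⟨e, he⟩ := Submodule.exists_linearEquiv_restrict_eq
    ((LinearEquiv.toSpanNonzeroSingleton K V x hx).symm ≪≫ₗ
      LinearEquiv.toSpanNonzeroSingleton K V y hy)
  have hex := he (LinearEquiv.toSpanNonzeroSingleton K V x hx 1)
  rw [LinearEquiv.trans_apply, LinearEquiv.symm_apply_apply,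
    LinearEquiv.toSpanNonzeroSingleton_one, LinearEquiv.toSpanNonzeroSingleton_one] at hex
  exact ⟨e, hex.symm⟩

section NonzeroSubsetsWithSum

variable {G H : Type*} [AddCommMonoid G] [AddCommMonoid H] [Fintype G] [Fintype H]
  [DecidableEq G] [DecidableEq H]

variable (G) in
/-- The family `A_g^k`. -/
def nonzeroSubsetsWithSum (k : ℕ) (g : G) : Finset (Finset G) :=
  (univ.filter fun x : G => x ≠ 0).powerset.filter fun S => S.card = k ∧ ∑ s ∈ S, s = g

theorem map_mem_nonzeroSubsetsWithSum_iff (e : G ≃+ H) {k : ℕ} {g : G} {S : Finset G} :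
    S.map e.toEquiv.toEmbedding ∈ nonzeroSubsetsWithSum H k (e g) ↔
      S ∈ nonzeroSubsetsWithSum G k g := by
  simp only [nonzeroSubsetsWithSum, mem_filter, mem_powerset, subset_iff, mem_univ, true_and,
    mem_map_equiv, card_map, sum_map]
  refine and_congr ?_ (and_congr_right fun _ => ?_)
  · exact (e.toEquiv.forall_congr fun {x} => by simp).symm
  · rw [← e.injective.eq_iff, map_sum]
    rfl

theorem card_nonzeroSubsetsWithSum_map (e : G ≃+ H) (k : ℕ) (g : G) :
    #(nonzeroSubsetsWithSum H k (e g)) = #(nonzeroSubsetsWithSum G k g) :=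
  (card_equiv e.toEquiv.finsetCongr fun _ => (map_mem_nonzeroSubsetsWithSum_iff e).symm).symm

end NonzeroSubsetsWithSum

theorem card_subsets_summing_eq_general (n : ℕ) (f f' : Fin n → ZMod 2)
    (hf : f ≠ 0) (hf' : f' ≠ 0) (k : ℕ) :
    ((univ.filter fun g : Fin n → ZMod 2 => g ≠ 0).powerset.filter
        (fun S => S.card = k ∧ ∑ s ∈ S, s = f)).card
      = ((univ.filter fun g : Fin n → ZMod 2 => g ≠ 0).powerset.filter
        (fun S => S.card = k ∧ ∑ s ∈ S, s = f')).card := by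
  obtain ⟨e, rfl⟩ := Module.exists_linearEquiv_apply_eq (K := ZMod 2) hf hf'
  exact (card_nonzeroSubsetsWithSum_map e.toAddEquiv k f).symm

/-- For `n ≥ 2`, let `E` be the set of nonzero elements of `(ZMod 2)^n`.
For any two nonzero elements `f, f'` and any `k`, the number of `k`-element subsets of `E`
summing to `f` equals the number of `k`-element subsets of `E` summing to `f'`. -/
theorem card_subsets_summing_eq (n : ℕ) (hn : 2 ≤ n) (f f' : Fin n → ZMod 2)
    (hf : f ≠ 0) (hf' : f' ≠ 0) (k : ℕ) :
    ((univ.filter fun g : Fin n → ZMod 2 => g ≠ 0).powerset.filter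
        (fun S => S.card = k ∧ ∑ s ∈ S, s = f)).card
      = ((univ.filter fun g : Fin n → ZMod 2 => g ≠ 0).powerset.filter
        (fun S => S.card = k ∧ ∑ s ∈ S, s = f')).card :=
  card_subsets_summing_eq_general n f f' hf hf' k
end

section
/- Let n ≥ 2, let E be the set of nonzero elements of (ZMod 2)^n (so |E| = 2^n − 1), and let p be a real number. Then the sum over all subsets S ⊆ E with Σ_{s∈S} s = 0 of p^{|S|} (1 − p)^{2^n − 1 − |S|} equals 2^{-n} + (1 − 2^{-n})(1 − 2p)^{2^{n−1}}. -/
/-!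
Average the characters `x ↦ (-1) ^ (g ⬝ᵥ x)` over `g` to detect `∑ S = 0`. For fixed `g` the
weighted sum over all subsets `S ⊆ E` factors as `∏ x ∈ E, (p (-1) ^ (g ⬝ᵥ x) + 1 - p)`, which is
`1` for `g = 0` and `(1 - 2p) ^ 2 ^ (n - 1)` otherwise, because a nontrivial real character takes
the value `-1` on exactly half of the group.
-/

open Finset

theorem Finset.prod_mul_add_eq_sum_powerset {ι R : Type*} [CommSemiring R] [DecidableEq ι]
    (s : Finset ι) (p q : R) (f : ι → R) :
    ∏ i ∈ s, (p * f i + q) = ∑ t ∈ s.powerset, p ^ #t * q ^ (#s - #t) * ∏ i ∈ t, f i := by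
  rw [prod_add]
  refine sum_congr rfl fun t ht => ?_
  rw [prod_mul_distrib, prod_const, prod_const, card_sdiff_of_subset (mem_powerset.1 ht)]
  ring

namespace AddChar

lemma map_sum_eq_prod_s2 {ι A M : Type*} [AddCommMonoid A] [CommMonoid M] (ψ : AddChar A M)
    (s : Finset ι) (f : ι → A) : ψ (∑ i ∈ s, f i) = ∏ i ∈ s, ψ (f i) := by
  classical
  induction s using Finset.induction_on with
  | empty => simp
  | insert a s ha ih => rw [sum_insert ha, prod_insert ha, map_add_eq_mul, ih]

section FiniteGroup

variable {G : Type*} [AddGroup G] [Fintype G]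

lemma apply_eq_one_or_eq_neg_one (ψ : AddChar G ℝ) (x : G) : ψ x = 1 ∨ ψ x = -1 := by
  have h : ψ x ^ Fintype.card G = 1 := by
    rw [← map_nsmul_eq_pow, card_nsmul_eq_zero, map_zero_eq_one]
  rcases pow_eq_one_iff_cases.1 h with h | h | h
  · exact absurd h Fintype.card_ne_zero
  · exact .inl h
  · exact .inr h.1

lemma two_mul_card_apply_eq_neg_one {ψ : AddChar G ℝ} (hψ : ψ ≠ 1) :
    2 * #{x | ψ x = -1} = Fintype.card G := by
  have hterm (x : G) : 1 - ψ x = 2 * if ψ x = -1 then 1 else 0 := by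
    rcases ψ.apply_eq_one_or_eq_neg_one x with h | h <;> norm_num [h]
  have hsum : ∑ x, (1 - ψ x) = Fintype.card G := by
    simp [sum_sub_distrib, sum_eq_zero_of_ne_one hψ]
  simp_rw [hterm, ← mul_sum, sum_boole] at hsum
  exact_mod_cast hsum

lemma prod_mul_add_one_sub (ψ : AddChar G ℝ) (p : ℝ) :
    ∏ x, (p * ψ x + (1 - p)) = (1 - 2 * p) ^ #{x | ψ x = -1} := by
  have hterm (x : G) : p * ψ x + (1 - p) = if ψ x = -1 then 1 - 2 * p else 1 := by
    rcases ψ.apply_eq_one_or_eq_neg_one x with h | h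
    · norm_num [h]
    · rw [h, if_pos rfl]; ring
  rw [prod_congr rfl fun x _ => hterm x, prod_ite, prod_const, prod_const_one, mul_one]

end FiniteGroup

section Sign

variable {ι : Type*} [Fintype ι]

def signChar (g : ι → ZMod 2) : AddChar (ι → ZMod 2) ℝ :=
  (zmodChar 2 (neg_one_sq : (-1 : ℝ) ^ 2 = 1)).compAddMonoidHom
    (AddMonoidHom.mk' (g ⬝ᵥ ·) (dotProduct_add g))

lemma signChar_apply (g x : ι → ZMod 2) : signChar g x = (-1) ^ (g ⬝ᵥ x).val := rfl

lemma signChar_comm (g x : ι → ZMod 2) : signChar g x = signChar x g := by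
  rw [signChar_apply, signChar_apply, dotProduct_comm]

lemma signChar_eq_one_iff [DecidableEq ι] {g : ι → ZMod 2} : signChar g = 1 ↔ g = 0 := by
  refine ⟨fun h => ?_, fun h => by ext x; simp [h, signChar_apply]⟩
  by_contra hg
  obtain ⟨i, hi⟩ := Function.ne_iff.1 hg
  have hgi : g i = 1 := (by decide : ∀ a : ZMod 2, a ≠ 0 → a = 1) _ hi
  have := DFunLike.congr_fun h (Pi.single i 1)
  norm_num [signChar_apply, hgi, ZMod.val_one] at this

lemma sum_signChar_apply [DecidableEq ι] (x : ι → ZMod 2) :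
    ∑ g, signChar g x = if x = 0 then 2 ^ Fintype.card ι else 0 := by
  simp_rw [signChar_comm _ x]
  split_ifs with hx
  · simp [hx, signChar_eq_one_iff.2]
  · exact sum_eq_zero_of_ne_one (signChar_eq_one_iff.not.2 hx)

lemma boole_sum_eq_zero_eq_sum_prod_signChar [DecidableEq ι] (S : Finset (ι → ZMod 2)) :
    (if ∑ s ∈ S, s = 0 then 1 else 0 : ℝ) =
      (2 ^ Fintype.card ι)⁻¹ * ∑ g, ∏ s ∈ S, signChar g s := by
  have hprod (g : ι → ZMod 2) : ∏ s ∈ S, signChar g s = signChar g (∑ s ∈ S, s) :=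
    ((signChar g).map_sum_eq_prod_s2 S id).symm
  simp_rw [hprod, sum_signChar_apply]
  split_ifs <;> simp

lemma sum_filter_sum_eq_zero [DecidableEq ι] (𝒮 : Finset (Finset (ι → ZMod 2)))
    (w : Finset (ι → ZMod 2) → ℝ) :
    ∑ S ∈ 𝒮 with ∑ s ∈ S, s = 0, w S =
      (2 ^ Fintype.card ι)⁻¹ * ∑ g, ∑ S ∈ 𝒮, w S * ∏ s ∈ S, signChar g s := by
  calc ∑ S ∈ 𝒮 with ∑ s ∈ S, s = 0, w S
      = ∑ S ∈ 𝒮, w S * if ∑ s ∈ S, s = 0 then 1 else 0 := by simp_rw [sum_filter, mul_boole]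
    _ = _ := by
      simp_rw [boole_sum_eq_zero_eq_sum_prod_signChar, mul_sum, mul_left_comm (w _)]
      exact sum_comm

lemma prod_erase_zero_signChar [DecidableEq ι] {g : ι → ZMod 2} (hg : g ≠ 0) (p : ℝ) :
    ∏ x ∈ univ.erase 0, (p * signChar g x + (1 - p)) =
      (1 - 2 * p) ^ 2 ^ (Fintype.card ι - 1) := by
  rw [prod_erase _ (by simp), prod_mul_add_one_sub]
  have h := two_mul_card_apply_eq_neg_one (signChar_eq_one_iff.not.2 hg)
  rw [Fintype.card_fun, ZMod.card] at h
  generalize Fintype.card ι = m at h ⊢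
  cases m with
  | zero => omega
  | succ k => rw [pow_succ'] at h; rw [Nat.add_sub_cancel, Nat.eq_of_mul_eq_mul_left two_pos h]

end Sign

end AddChar

theorem sum_over_zero_sum_subsets_general (n : ℕ) (p : ℝ) :
    ∑ S ∈ (univ.filter fun g : Fin n → ZMod 2 => g ≠ 0).powerset.filter
        (fun S => ∑ s ∈ S, s = 0),
      p ^ S.card * (1 - p) ^ (2 ^ n - 1 - S.card)
    = ((2 : ℝ) ^ n)⁻¹ + (1 - ((2 : ℝ) ^ n)⁻¹) * (1 - 2 * p) ^ 2 ^ (n - 1) := by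
  have hcard : #(univ.erase (0 : Fin n → ZMod 2)) = 2 ^ n - 1 := by simp
  have hzero :
      ∏ x ∈ univ.erase 0, (p * AddChar.signChar (0 : Fin n → ZMod 2) x + (1 - p)) = 1 := by
    simp [AddChar.signChar_eq_one_iff.2 rfl]
  rw [filter_ne', AddChar.sum_filter_sum_eq_zero, ← hcard]
  simp_rw [← prod_mul_add_eq_sum_powerset]
  rw [← add_sum_erase _ _ (mem_univ 0), hzero,
    sum_congr rfl fun g hg => AddChar.prod_erase_zero_signChar (ne_of_mem_erase hg) p, sum_const,
    hcard, nsmul_eq_mul, Nat.cast_sub Nat.one_le_two_pow, Fintype.card_fin]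
  push_cast
  field_simp

/-- For `n ≥ 2`, summing `p^{|S|} (1-p)^{2^n - 1 - |S|}` over all subsets `S`
of the nonzero elements of `(ZMod 2)^n` whose elements sum to zero gives
`2^{-n} + (1 - 2^{-n}) (1 - 2p)^{2^{n-1}}`. -/
theorem sum_over_zero_sum_subsets (n : ℕ) (hn : 2 ≤ n) (p : ℝ) :
    ∑ S ∈ (univ.filter fun g : Fin n → ZMod 2 => g ≠ 0).powerset.filter
        (fun S => ∑ s ∈ S, s = 0),
      p ^ S.card * (1 - p) ^ (2 ^ n - 1 - S.card)
    = ((2 : ℝ) ^ n)⁻¹ + (1 - ((2 : ℝ) ^ n)⁻¹) * (1 - 2 * p) ^ 2 ^ (n - 1) :=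
  sum_over_zero_sum_subsets_general n p
end

section
/- Let F be a finite set and let p : F → ℝ. Then the sum over all subsets S ⊆ F of odd cardinality of ∏_{f∈S} p(f) · ∏_{f∈F∖S} (1 − p(f)) equals (1 − ∏_{f∈F} (1 − 2p(f)))/2. -/
/-! Expanding `∏ (a + b)` and `∏ (b - a)` over the subsets `S ⊆ F`, the term of `S` carries the sign
`(-1) ^ #S` in the second product, so in the difference the even subsets cancel and the odd ones
count twice. With `a = p`, `b = 1 - p` the first product is `1`. -/

open Finset

theorem Finset.two_mul_sum_powerset_odd_prod_mul_prod {α R : Type*} [DecidableEq α] [CommRing R]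
    (F : Finset α) (a b : α → R) :
    2 * ∑ S ∈ F.powerset.filter (fun S => Odd S.card), (∏ f ∈ S, a f) * ∏ f ∈ F \ S, b f
      = ∏ f ∈ F, (a f + b f) - ∏ f ∈ F, (b f - a f) := by
  have signed_expansion : ∏ f ∈ F, (b f - a f)
      = ∑ S ∈ F.powerset, (-1) ^ S.card * ((∏ f ∈ S, a f) * ∏ f ∈ F \ S, b f) := by
    simp_rw [sub_eq_neg_add, prod_add, prod_neg, mul_assoc]
  rw [prod_add, signed_expansion, ← sum_sub_distrib, sum_filter, mul_sum]
  refine sum_congr rfl fun S _ => ?_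
  rcases Nat.even_or_odd S.card with h | h
  · rw [if_neg (Nat.not_odd_iff_even.mpr h), h.neg_one_pow]; ring
  · rw [if_pos h, h.neg_one_pow]; ring

/-- For a finite set `F` and `p : F → ℝ`, the sum over all odd-cardinality
subsets `S ⊆ F` of `∏_{f∈S} p f · ∏_{f∈F∖S} (1 - p f)` equals
`(1 - ∏_{f∈F} (1 - 2 p f)) / 2`. -/
theorem odd_subset_sum {α : Type*} [DecidableEq α] (F : Finset α) (p : α → ℝ) :
    ∑ S ∈ F.powerset.filter (fun S => Odd S.card),
      (∏ f ∈ S, p f) * ∏ f ∈ F \ S, (1 - p f)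
    = (1 - ∏ f ∈ F, (1 - 2 * p f)) / 2 := by
  rw [eq_div_iff two_ne_zero, mul_comm, two_mul_sum_powerset_odd_prod_mul_prod]
  congr 1
  · simp
  · exact prod_congr rfl fun f _ => by ring
end
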